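/- Let {T_i g_k}_{i∈[1,N], k∈[0,M-1]} be a localized spectral graph filter frame with lower frame bound A and upper frame bound B, and let A_g denote its analysis operator. Then for any i_0, k_0 with ‖T_{i_0} g_{k_0}‖_2 > 0, the concentration of the analysis coefficients of the atom T_{i_0} g_{k_0} satisfies ‖A_g T_{i_0}g_{k_0}‖_∞/‖A_g T_{i_0}g_{k_0}‖_2 ≤ ‖T_{ĩ} g_{k̃}‖_2 / √A, where k̃ = argmax_k ‖T_{i_0}(g_{k_0}·g_k)‖_∞ and ĩ = argmax_i |T_{i_0}(g_{k_0}·g_{k̃})(i)|. -/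

import Mathlib

open Finset

noncomputable def lpnorm {ι : Type*} [Fintype ι] (p : ℝ) (f : ι → ℂ) : ℝ :=
  (∑ i, ‖f i‖ ^ p) ^ (1 / p)

noncomputable def ip {ι : Type*} [Fintype ι] (x y : ι → ℂ) : ℂ :=
  ∑ i, x i * (starRingEnd ℂ) (y i)

noncomputable def locOpR {N : ℕ} (u : Fin N → Fin N → ℂ) (lam : Fin N → ℝ)
    (g : ℝ → ℝ) (i : Fin N) : Fin N → ℂ :=
  fun n => (Real.sqrt N : ℂ) * ∑ l, (g (lam l) : ℂ) * (starRingEnd ℂ) (u l i) * u l n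

lemma lpnorm_two {ι : Type*} [Fintype ι] (f : ι → ℂ) :
    lpnorm 2 f = Real.sqrt (∑ i, ‖f i‖ ^ 2) := by
  unfold lpnorm
  have h : (∑ i, ‖f i‖ ^ (2:ℝ)) = ∑ i, ‖f i‖ ^ 2 := by
    refine Finset.sum_congr rfl fun i _ => ?_
    rw [show (2:ℝ) = ((2:ℕ):ℝ) by norm_num, Real.rpow_natCast]
  rw [h, Real.sqrt_eq_rpow]

lemma lpnorm_two_sq {ι : Type*} [Fintype ι] (f : ι → ℂ) :
    lpnorm 2 f ^ 2 = ∑ i, ‖f i‖ ^ 2 := by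
  rw [lpnorm_two, Real.sq_sqrt (by positivity)]

lemma abs_ip_le {ι : Type*} [Fintype ι] (x y : ι → ℂ) :
    ‖ip x y‖ ≤ lpnorm 2 x * lpnorm 2 y := by
  unfold ip
  calc ‖∑ i, x i * (starRingEnd ℂ) (y i)‖
      ≤ ∑ i, ‖x i * (starRingEnd ℂ) (y i)‖ := norm_sum_le _ _
    _ = ∑ i, ‖x i‖ * ‖y i‖ := by
        simp [norm_mul]
    _ ≤ Real.sqrt (∑ i, ‖x i‖ ^ 2) * Real.sqrt (∑ i, ‖y i‖ ^ 2) :=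
        Real.sum_mul_le_sqrt_mul_sqrt _ _ _
    _ = lpnorm 2 x * lpnorm 2 y := by rw [lpnorm_two, lpnorm_two]

lemma abs_ip_comm {ι : Type*} [Fintype ι] (x y : ι → ℂ) :
    ‖ip x y‖ = ‖ip y x‖ := by
  unfold ip
  rw [← Complex.norm_conj]
  simp [map_sum, map_mul, mul_comm]

lemma ip_loc {N : ℕ} (u : Fin N → Fin N → ℂ)
    (hortho : ∀ l m, ip (u l) (u m) = if l = m then 1 else 0)
    (lam : Fin N → ℝ) (g1 g2 : ℝ → ℝ) (i j : Fin N) :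
    ip (locOpR u lam g1 i) (locOpR u lam g2 j)
      = (N:ℂ) * ∑ l, (g1 (lam l) : ℂ) * (g2 (lam l) : ℂ) *
          (starRingEnd ℂ) (u l i) * u l j := by
  have horth : ∀ l m, (∑ n, u l n * (starRingEnd ℂ) (u m n)) = if l = m then 1 else 0 := by
    intro l m; simpa [ip] using hortho l m
  have hc : (Real.sqrt N : ℂ) * (Real.sqrt N : ℂ) = (N:ℂ) := by
    rw [← Complex.ofReal_mul, Real.mul_self_sqrt (Nat.cast_nonneg N)]
    push_cast; ring
  unfold ip locOpR
  simp only [map_mul, map_sum, Complex.conj_ofReal, Complex.conj_conj]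
  calc (∑ n, ((Real.sqrt N : ℂ) * ∑ l, (g1 (lam l) : ℂ) * (starRingEnd ℂ) (u l i) * u l n) *
        ((Real.sqrt N : ℂ) * ∑ m, (g2 (lam m) : ℂ) * (u m j) * (starRingEnd ℂ) (u m n)))
      = ((Real.sqrt N : ℂ) * (Real.sqrt N : ℂ)) *
          ∑ n, ∑ l, ∑ m, ((g1 (lam l) : ℂ) * (starRingEnd ℂ) (u l i)) *
            ((g2 (lam m) : ℂ) * (u m j)) * (u l n * (starRingEnd ℂ) (u m n)) := by
        rw [Finset.mul_sum]
        refine Finset.sum_congr rfl fun n _ => ?_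
        rw [mul_mul_mul_comm, Finset.sum_mul_sum]
        congr 1
        refine Finset.sum_congr rfl fun l _ => ?_
        refine Finset.sum_congr rfl fun m _ => ?_
        ring
    _ = (N:ℂ) * ∑ l, ∑ m, ((g1 (lam l) : ℂ) * (starRingEnd ℂ) (u l i)) *
            ((g2 (lam m) : ℂ) * (u m j)) * (∑ n, u l n * (starRingEnd ℂ) (u m n)) := by
        rw [hc, Finset.sum_comm]
        congr 1
        refine Finset.sum_congr rfl fun l _ => ?_
        rw [Finset.sum_comm]
        refine Finset.sum_congr rfl fun m _ => ?_
        rw [Finset.mul_sum]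
    _ = (N:ℂ) * ∑ l, (g1 (lam l) : ℂ) * (g2 (lam l) : ℂ) *
          (starRingEnd ℂ) (u l i) * u l j := by
        congr 1
        refine Finset.sum_congr rfl fun l _ => ?_
        rw [Finset.sum_eq_single l]
        · rw [horth l l, if_pos rfl]; ring
        · intro m _ hm
          rw [horth l m, if_neg (fun h => hm h.symm), mul_zero]
        · intro h; exact absurd (Finset.mem_univ l) h

lemma abs_ip_atom {N M : ℕ} (u : Fin N → Fin N → ℂ)
    (hortho : ∀ l m, ip (u l) (u m) = if l = m then 1 else 0)
    (lam : Fin N → ℝ) (g : Fin M → ℝ → ℝ) (k0 k : Fin M) (i0 i : Fin N) :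
    ‖ip (locOpR u lam (g k) i) (locOpR u lam (g k0) i0)‖
      = Real.sqrt N * ‖locOpR u lam (fun x => g k0 x * g k x) i0 i‖ := by
  rw [ip_loc u hortho]
  have hS : (∑ l, (g k (lam l):ℂ) * (g k0 (lam l):ℂ) * (starRingEnd ℂ) (u l i) * u l i0)
      = (starRingEnd ℂ) (∑ l, ((g k0 (lam l) * g k (lam l) : ℝ):ℂ) *
          (starRingEnd ℂ) (u l i0) * u l i) := by
    rw [map_sum]
    refine Finset.sum_congr rfl fun l _ => ?_
    simp only [map_mul, Complex.conj_conj, Complex.conj_ofReal]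
    push_cast; ring
  rw [hS, norm_mul, Complex.norm_conj]
  have hloc : locOpR u lam (fun x => g k0 x * g k x) i0 i
      = (Real.sqrt N:ℂ) * ∑ l, ((g k0 (lam l) * g k (lam l) : ℝ):ℂ) *
          (starRingEnd ℂ) (u l i0) * u l i := rfl
  rw [hloc, norm_mul]
  rw [Complex.norm_natCast]
  have : ‖((Real.sqrt N : ℝ) : ℂ)‖ = Real.sqrt N := by
    rw [Complex.norm_real, Real.norm_eq_abs, abs_of_nonneg (Real.sqrt_nonneg _)]
  rw [this, ← mul_assoc, Real.mul_self_sqrt (Nat.cast_nonneg N)]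


/-- Local uncertainty principle (p = ∞ case): the concentration of the analysis
coefficients of the atom T_{i₀} g_{k₀} is bounded by ‖T_ĩ g_k̃‖₂ / √A. -/
theorem stmt17 {N M : ℕ} (u : Fin N → Fin N → ℂ)
    (hortho : ∀ l m, ip (u l) (u m) = if l = m then 1 else 0)
    (lam : Fin N → ℝ) (g : Fin M → ℝ → ℝ) (A B : ℝ) (hA : 0 < A) (hAB : A ≤ B)
    (hframe : ∀ f : Fin N → ℂ,
      A * (lpnorm 2 f) ^ 2 ≤
          ∑ q : Fin N × Fin M, ‖ip f (locOpR u lam (g q.2) q.1)‖ ^ 2 ∧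
        ∑ q : Fin N × Fin M, ‖ip f (locOpR u lam (g q.2) q.1)‖ ^ 2 ≤
          B * (lpnorm 2 f) ^ 2)
    (i0 : Fin N) (k0 : Fin M) (h0 : 0 < lpnorm 2 (locOpR u lam (g k0) i0))
    (ktil : Fin M) (itil : Fin N)
    (hktil : ∀ k, (⨆ n, ‖locOpR u lam (fun x => g k0 x * g k x) i0 n‖) ≤
      ⨆ n, ‖locOpR u lam (fun x => g k0 x * g ktil x) i0 n‖)
    (hitil : ∀ i, ‖locOpR u lam (fun x => g k0 x * g ktil x) i0 i‖ ≤
      ‖locOpR u lam (fun x => g k0 x * g ktil x) i0 itil‖) :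
    (⨆ q : Fin N × Fin M,
        ‖ip (locOpR u lam (g q.2) q.1) (locOpR u lam (g k0) i0)‖) /
        lpnorm 2 (fun q : Fin N × Fin M =>
          ip (locOpR u lam (g q.2) q.1) (locOpR u lam (g k0) i0)) ≤
      lpnorm 2 (locOpR u lam (g ktil) itil) / Real.sqrt A := by
  haveI : Nonempty (Fin N) := ⟨i0⟩
  haveI : Nonempty (Fin N × Fin M) := ⟨(i0, k0)⟩
  set f := locOpR u lam (g k0) i0 with hf
  set L := lpnorm 2 (locOpR u lam (g ktil) itil) with hL
  have hLnn : 0 ≤ L := by rw [hL, lpnorm_two]; positivity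
  have habs : ∀ q : Fin N × Fin M,
      ‖ip (locOpR u lam (g q.2) q.1) f‖
        = Real.sqrt N * ‖locOpR u lam (fun x => g k0 x * g q.2 x) i0 q.1‖ :=
    fun q => abs_ip_atom u hortho lam g k0 q.2 i0 q.1
  have hsup : (⨆ q : Fin N × Fin M, ‖ip (locOpR u lam (g q.2) q.1) f‖) ≤
      Real.sqrt N * ‖locOpR u lam (fun x => g k0 x * g ktil x) i0 itil‖ := by
    apply ciSup_le
    intro q
    rw [habs q]
    apply mul_le_mul_of_nonneg_left _ (Real.sqrt_nonneg _)
    calc ‖locOpR u lam (fun x => g k0 x * g q.2 x) i0 q.1‖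
        ≤ ⨆ n, ‖locOpR u lam (fun x => g k0 x * g q.2 x) i0 n‖ :=
          le_ciSup (f := fun n => ‖locOpR u lam (fun x => g k0 x * g q.2 x) i0 n‖)
            (Set.Finite.bddAbove (Set.finite_range _)) q.1
      _ ≤ ⨆ n, ‖locOpR u lam (fun x => g k0 x * g ktil x) i0 n‖ := hktil q.2
      _ ≤ _ := ciSup_le hitil
  have hcs : Real.sqrt N * ‖locOpR u lam (fun x => g k0 x * g ktil x) i0 itil‖
      ≤ L * lpnorm 2 f := by
    rw [← abs_ip_atom u hortho lam g k0 ktil i0 itil]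
    exact abs_ip_le _ _
  have hden : Real.sqrt A * lpnorm 2 f ≤
      lpnorm 2 (fun q : Fin N × Fin M => ip (locOpR u lam (g q.2) q.1) f) := by
    have h1 : A * (lpnorm 2 f) ^ 2 ≤
        ∑ q : Fin N × Fin M, ‖ip (locOpR u lam (g q.2) q.1) f‖ ^ 2 := by
      refine (hframe f).1.trans_eq ?_
      exact Finset.sum_congr rfl fun q _ => by rw [abs_ip_comm]
    calc Real.sqrt A * lpnorm 2 f = Real.sqrt (A * (lpnorm 2 f) ^ 2) := by
          rw [Real.sqrt_mul hA.le, Real.sqrt_sq h0.le]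
      _ ≤ Real.sqrt (∑ q : Fin N × Fin M,
            ‖ip (locOpR u lam (g q.2) q.1) f‖ ^ 2) := Real.sqrt_le_sqrt h1
      _ = _ := (lpnorm_two _).symm
  have hdpos : 0 < Real.sqrt A * lpnorm 2 f := mul_pos (Real.sqrt_pos.2 hA) h0
  calc (⨆ q : Fin N × Fin M, ‖ip (locOpR u lam (g q.2) q.1) f‖) /
        lpnorm 2 (fun q : Fin N × Fin M => ip (locOpR u lam (g q.2) q.1) f)
      ≤ (L * lpnorm 2 f) / (Real.sqrt A * lpnorm 2 f) :=
        div_le_div₀ (by positivity) (hsup.trans hcs) hdpos hden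
    _ = L / Real.sqrt A := mul_div_mul_right _ _ (ne_of_gt h0)
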